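/- (Proposition 2, inequality form.) Let S be a real symmetric matrix indexed by ι = Fin q ⊕ Fin q, let λ₂ ≥ 0 and suppose λ₁ ≥ |S (inl i) (inr j)| for all i, j ∈ Fin q. Then for every positive definite symmetric real matrix Θ indexed by ι, the block-diagonal matrix Θ̄ := fromBlocks Θ_LL 0 0 Θ_RR (obtained from Θ by setting the off-diagonal blocks Θ_LR and Θ_RL to zero) is positive definite and L(Θ̄) ≤ L(Θ). -/

import Mathlib

open Matrix Sum

/-- The swap permutation matrix `J = fromBlocks 0 I I 0` on `Fin q ⊕ Fin q`. -/
noncomputable def Jswap (q : ℕ) : Matrix (Fin q ⊕ Fin q) (Fin q ⊕ Fin q) ℝ :=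
  Matrix.fromBlocks 0 1 1 0

/-- Entrywise ℓ1 norm of a real matrix. -/
noncomputable def l1norm {m n : Type*} [Fintype m] [Fintype n] (A : Matrix m n ℝ) : ℝ :=
  ∑ i, ∑ j, |A i j|

/-- The pdglasso objective
`L(Θ) = -log det Θ + tr(SΘ) + λ₁‖Θ‖₁ + λ₂(‖Θ_LL - Θ_RR‖₁ + ‖Θ_LR - Θ_RL‖₁)`. -/
noncomputable def pdObjective {q : ℕ} (S : Matrix (Fin q ⊕ Fin q) (Fin q ⊕ Fin q) ℝ)
    (l1 l2 : ℝ) (Θ : Matrix (Fin q ⊕ Fin q) (Fin q ⊕ Fin q) ℝ) : ℝ :=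
  -Real.log Θ.det + (S * Θ).trace + l1 * l1norm Θ
    + l2 * (l1norm (Θ.toBlocks₁₁ - Θ.toBlocks₂₂) + l1norm (Θ.toBlocks₁₂ - Θ.toBlocks₂₁))

/-!
Write `Θ = Θ̄ + N` with `Θ̄` the block-diagonal part and `N` the off-diagonal blocks, and compare
the objective term by term. For the log-determinant this is Fischer's inequality
`det Θ ≤ det Θ_LL · det Θ_RR`: by the Schur complement, `det Θ = det Θ_LL · det (Θ_RR - P)` with
`P ⪰ 0`, and `det` is monotone on positive semidefinite matrices. Passing to `Θ̄` changes the trace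
term by `-tr (S N)` and the `λ₁` term by `-λ₁ ‖N‖₁`; since `N` only meets the cross-block entries of
the symmetric `S`, all bounded by `λ₁`, we have `|tr (S N)| ≤ λ₁ ‖N‖₁`. The fusion term of `Θ̄` just
loses `‖Θ_LR - Θ_RL‖₁ ≥ 0`.
-/

namespace Matrix

open scoped ComplexOrder MatrixOrder

variable {m n : Type*} [Fintype m] [DecidableEq m] [Fintype n] [DecidableEq n]

theorem PosSemidef.one_le_det_one_add {M : Matrix n n ℝ} (hM : M.PosSemidef) :
    1 ≤ (1 + M).det := by
  have hH : (1 + M).IsHermitian := (PosSemidef.one.add hM).isHermitian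
  rw [hH.det_eq_prod_eigenvalues]
  refine Finset.one_le_prod fun i _ => ?_
  have hi : hH.eigenvalues i ∈ spectrum ℝ (algebraMap ℝ _ 1 + M) := by
    simpa using hH.eigenvalues_mem_spectrum_real i
  rw [← spectrum.singleton_add_eq, Set.singleton_add] at hi
  obtain ⟨μ, hμ, hμi⟩ := hi
  have := (posSemidef_iff_isHermitian_and_spectrum_nonneg.mp hM).2 hμ
  simp only [Set.mem_ofPred_eq] at this
  simp only [RCLike.ofReal_real_eq_id, id_eq]
  linarith

theorem PosSemidef.det_le_det_add {A P : Matrix n n ℝ} (hA : A.PosSemidef)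
    (hP : P.PosSemidef) : A.det ≤ (A + P).det := by
  rcases eq_or_ne A.det 0 with hA0 | hA0
  · rw [hA0]; exact (hA.add hP).det_nonneg
  obtain ⟨Y, hY, rfl⟩ := CStarAlgebra.isStrictlyPositive_iff_eq_star_mul_self.mp
    (hA.posDef_iff_det_ne_zero.mpr hA0).isStrictlyPositive
  rw [star_eq_conjTranspose] at hA ⊢
  have hYdet : IsUnit Y.det := (isUnit_iff_isUnit_det Y).mp hY
  have hM : ((Y⁻¹)ᴴ * P * Y⁻¹).PosSemidef := hP.conjTranspose_mul_mul_same Y⁻¹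
  have hconj : Yᴴ * (1 + (Y⁻¹)ᴴ * P * Y⁻¹) * Y = Yᴴ * Y + P := by
    have hl : Yᴴ * (Y⁻¹)ᴴ = 1 := by
      rw [← conjTranspose_mul, nonsing_inv_mul _ hYdet, conjTranspose_one]
    calc Yᴴ * (1 + (Y⁻¹)ᴴ * P * Y⁻¹) * Y = Yᴴ * Y + Yᴴ * (Y⁻¹)ᴴ * P * (Y⁻¹ * Y) := by
          simp only [Matrix.mul_add, Matrix.add_mul, Matrix.mul_one, Matrix.mul_assoc]
      _ = Yᴴ * Y + P := by rw [hl, nonsing_inv_mul _ hYdet, Matrix.one_mul, Matrix.mul_one]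
  rw [← hconj, det_mul, det_mul, det_mul, mul_right_comm, ← det_mul]
  exact le_mul_of_one_le_right hA.det_nonneg hM.one_le_det_one_add

theorem PosSemidef.det_le_det_toBlocks₁₁_mul_det_toBlocks₂₂
    {Θ : Matrix (m ⊕ n) (m ⊕ n) ℝ} (hΘ : Θ.PosSemidef) :
    Θ.det ≤ Θ.toBlocks₁₁.det * Θ.toBlocks₂₂.det := by
  rcases eq_or_ne Θ.det 0 with hΘ0 | hΘ0
  · rw [hΘ0]
    exact mul_nonneg (hΘ.submatrix Sum.inl).det_nonneg (hΘ.submatrix Sum.inr).det_nonneg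
  have hA : Θ.toBlocks₁₁.PosDef :=
    (hΘ.posDef_iff_det_ne_zero.mpr hΘ0).submatrix Sum.inl_injective
  let := hA.isUnit.invertible
  obtain ⟨-, hBC, -, -⟩ := isHermitian_fromBlocks_iff.mp ((fromBlocks_toBlocks Θ).symm ▸ hΘ.1)
  set A := Θ.toBlocks₁₁
  set B := Θ.toBlocks₁₂
  set D := Θ.toBlocks₂₂
  have hΘ' : Θ = fromBlocks A B Bᴴ D := by rw [hBC, fromBlocks_toBlocks]
  rw [hΘ'] at hΘ ⊢
  have hSchur : (D - Bᴴ * A⁻¹ * B).PosSemidef := (hA.fromBlocks₁₁ B D).mp hΘ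
  have hP : (Bᴴ * A⁻¹ * B).PosSemidef := hA.inv.posSemidef.conjTranspose_mul_mul_same B
  rw [det_fromBlocks₁₁, invOf_eq_nonsing_inv]
  refine mul_le_mul_of_nonneg_left ?_ hA.det_pos.le
  simpa using hSchur.det_le_det_add hP

theorem PosDef.fromBlocks_zero {𝕜 : Type*} [RCLike 𝕜] {A : Matrix m m 𝕜} {D : Matrix n n 𝕜}
    (hA : A.PosDef) (hD : D.PosDef) : (fromBlocks A 0 0 D).PosDef := by
  let := hA.isUnit.invertible
  have h : (fromBlocks A 0 0ᴴ D).PosSemidef :=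
    (hA.fromBlocks₁₁ 0 D).mpr (by simpa using hD.posSemidef)
  rw [conjTranspose_zero] at h
  rw [h.posDef_iff_det_ne_zero, det_fromBlocks_zero₂₁]
  exact mul_ne_zero hA.det_pos.ne' hD.det_pos.ne'

end Matrix

section L1Norm

variable {m n : Type*} [Fintype m] [Fintype n]

theorem l1norm_nonneg (A : Matrix m n ℝ) : 0 ≤ l1norm A := by
  unfold l1norm; positivity

theorem l1norm_zero : l1norm (0 : Matrix m n ℝ) = 0 := by
  simp [l1norm]

theorem l1norm_fromBlocks {l o : Type*} [Fintype l] [Fintype o] (A : Matrix m l ℝ)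
    (B : Matrix m o ℝ) (C : Matrix n l ℝ) (D : Matrix n o ℝ) :
    l1norm (fromBlocks A B C D) = l1norm A + l1norm B + l1norm C + l1norm D := by
  simp only [l1norm, Fintype.sum_sum_type, fromBlocks_apply₁₁, fromBlocks_apply₁₂,
    fromBlocks_apply₂₁, fromBlocks_apply₂₂, Finset.sum_add_distrib]
  ring

theorem abs_trace_mul_le_mul_l1norm (S : Matrix m n ℝ) (N : Matrix n m ℝ) {c : ℝ}
    (hS : ∀ i j, N j i ≠ 0 → |S i j| ≤ c) : |(S * N).trace| ≤ c * l1norm N :=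
  calc |(S * N).trace| = |∑ i, ∑ j, S i j * N j i| := rfl
    _ ≤ ∑ i, ∑ j, |S i j| * |N j i| := by
      refine (Finset.abs_sum_le_sum_abs _ _).trans (Finset.sum_le_sum fun i _ => ?_)
      simpa only [abs_mul] using Finset.abs_sum_le_sum_abs (fun j => S i j * N j i) Finset.univ
    _ ≤ ∑ i, ∑ j, c * |N j i| := by
      refine Finset.sum_le_sum fun i _ => Finset.sum_le_sum fun j _ => ?_
      by_cases hN : N j i = 0
      · simp [hN]
      · exact mul_le_mul_of_nonneg_right (hS i j hN) (abs_nonneg _)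
    _ = c * l1norm N := by simp only [l1norm, Finset.mul_sum]; exact Finset.sum_comm

end L1Norm

theorem trace_mul_add_mul_l1norm_fromBlocks_toBlocks_diag_le {m n : Type*} [Fintype m]
    [Fintype n] {S : Matrix (m ⊕ n) (m ⊕ n) ℝ} (hS : S.IsSymm) {c : ℝ}
    (hc : ∀ i j, |S (inl i) (inr j)| ≤ c) (Θ : Matrix (m ⊕ n) (m ⊕ n) ℝ) :
    (S * fromBlocks Θ.toBlocks₁₁ 0 0 Θ.toBlocks₂₂).trace
        + c * l1norm (fromBlocks Θ.toBlocks₁₁ 0 0 Θ.toBlocks₂₂)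
      ≤ (S * Θ).trace + c * l1norm Θ := by
  set N := fromBlocks 0 Θ.toBlocks₁₂ Θ.toBlocks₂₁ 0
  have hsplit : Θ = fromBlocks Θ.toBlocks₁₁ 0 0 Θ.toBlocks₂₂ + N := by
    rw [fromBlocks_add, add_zero, zero_add, zero_add, add_zero, fromBlocks_toBlocks]
  have hN : |(S * N).trace| ≤ c * l1norm N := by
    refine abs_trace_mul_le_mul_l1norm S N ?_
    rintro (i | i) (j | j) hij
    · simp [N] at hij
    · exact hc i j
    · rw [hS.apply (inl j) (inr i)]; exact hc j i
    · simp [N] at hij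
  have htrace : (S * Θ).trace = (S * fromBlocks Θ.toBlocks₁₁ 0 0 Θ.toBlocks₂₂).trace
      + (S * N).trace := by
    conv_lhs => rw [hsplit]
    rw [Matrix.mul_add, trace_add]
  have hnorm : l1norm Θ = l1norm (fromBlocks Θ.toBlocks₁₁ 0 0 Θ.toBlocks₂₂) + l1norm N := by
    conv_lhs => rw [← fromBlocks_toBlocks Θ]
    simp only [N, l1norm_fromBlocks, l1norm_zero]
    ring
  rw [htrace, hnorm]
  linarith [neg_abs_le (S * N).trace]

theorem pdglasso_blockdiagonal_decreases_objective_general (q : ℕ)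
    (S : Matrix (Fin q ⊕ Fin q) (Fin q ⊕ Fin q) ℝ) (hS : S.IsSymm)
    (l1 l2 : ℝ) (hl2 : 0 ≤ l2)
    (hl1 : ∀ i j : Fin q, |S (inl i) (inr j)| ≤ l1)
    (Θ : Matrix (Fin q ⊕ Fin q) (Fin q ⊕ Fin q) ℝ) (hΘ : Θ.PosDef) :
    (Matrix.fromBlocks Θ.toBlocks₁₁ 0 0 Θ.toBlocks₂₂).PosDef ∧
      pdObjective S l1 l2 (Matrix.fromBlocks Θ.toBlocks₁₁ 0 0 Θ.toBlocks₂₂)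
        ≤ pdObjective S l1 l2 Θ := by
  have hA : Θ.toBlocks₁₁.PosDef := hΘ.submatrix Sum.inl_injective
  have hD : Θ.toBlocks₂₂.PosDef := hΘ.submatrix Sum.inr_injective
  refine ⟨hA.fromBlocks_zero hD, ?_⟩
  have hlogdet : Real.log Θ.det ≤ Real.log (fromBlocks Θ.toBlocks₁₁ 0 0 Θ.toBlocks₂₂).det := by
    rw [det_fromBlocks_zero₂₁]
    exact Real.log_le_log hΘ.det_pos hΘ.posSemidef.det_le_det_toBlocks₁₁_mul_det_toBlocks₂₂
  have hfused : 0 ≤ l2 * l1norm (Θ.toBlocks₁₂ - Θ.toBlocks₂₁) := mul_nonneg hl2 (l1norm_nonneg _)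
  have htrace_l1 := trace_mul_add_mul_l1norm_fromBlocks_toBlocks_diag_le hS hl1 Θ
  simp only [pdObjective, toBlocks_fromBlocks₁₁, toBlocks_fromBlocks₁₂, toBlocks_fromBlocks₂₁,
    toBlocks_fromBlocks₂₂, sub_zero, l1norm_zero]
  linarith

/-- Proposition 2, inequality form: if `λ₁ ≥ |s_{i j'}|` for all across-block
pairs, then for every positive definite symmetric `Θ`, the block-diagonal truncation
`fromBlocks Θ_LL 0 0 Θ_RR` is positive definite and does not increase the objective. -/
theorem pdglasso_blockdiagonal_decreases_objective (q : ℕ) (hq : 0 < q)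
    (S : Matrix (Fin q ⊕ Fin q) (Fin q ⊕ Fin q) ℝ) (hS : S.IsSymm)
    (l1 l2 : ℝ) (hl2 : 0 ≤ l2)
    (hl1 : ∀ i j : Fin q, |S (inl i) (inr j)| ≤ l1)
    (Θ : Matrix (Fin q ⊕ Fin q) (Fin q ⊕ Fin q) ℝ) (hΘ : Θ.PosDef) (hΘs : Θ.IsSymm) :
    (Matrix.fromBlocks Θ.toBlocks₁₁ 0 0 Θ.toBlocks₂₂).PosDef ∧
      pdObjective S l1 l2 (Matrix.fromBlocks Θ.toBlocks₁₁ 0 0 Θ.toBlocks₂₂)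
        ≤ pdObjective S l1 l2 Θ :=
  pdglasso_blockdiagonal_decreases_objective_general q S hS l1 l2 hl2 hl1 Θ hΘ
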